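/- Let G be a finite digraph, γ ≥ 1 an integer, and W a walk from i to j in G. Then there exists a walk W′ from i to j obtained from W by removing cycles such that l(W′) ≡ l(W) (mod γ) and every node of G appears at most γ times in the node sequence of W′. -/

import Mathlib

open Classical

noncomputable section

namespace MaxPlus

/-- A square matrix over the max-plus semiring `ℝmax = ℝ ∪ {-∞}`,
represented as `WithBot ℝ` (with `⊥ = -∞`, `+` the usual addition). -/
abbrev MPMat (n : ℕ) := Fin n → Fin n → WithBot ℝ

variable {n : ℕ}

/-- Max-plus matrix multiplication: `(A⊗B)_{ij} = max_k (a_{ik} + b_{kj})`. -/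
def mpMul (A B : MPMat n) : MPMat n := fun i j => Finset.univ.sup fun k => A i k + B k j

/-- Max-plus matrix power, with `A^0` the max-plus identity. -/
def mpPow (A : MPMat n) : ℕ → MPMat n
  | 0 => fun i j => if i = j then (0 : WithBot ℝ) else ⊥
  | t + 1 => mpMul A (mpPow A t)

/-- Max-plus matrix-vector product. -/
def mpMulVec (A : MPMat n) (x : Fin n → WithBot ℝ) : Fin n → WithBot ℝ :=
  fun i => Finset.univ.sup fun k => A i k + x k

/-- A digraph on the node set `{1,…,n}`: a set of vertices together with an
edge relation. -/
structure SubD (n : ℕ) where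
  verts : Set (Fin n)
  edge : Fin n → Fin n → Prop

/-- The weighted digraph `𝒟(A)` of a max-plus matrix: all `n` nodes, with an
edge `(i,j)` whenever `a_{ij} ≠ -∞`. -/
def digr (A : MPMat n) : SubD n := ⟨Set.univ, fun i j => A i j ≠ ⊥⟩

/-- `W` (a nonempty list of nodes) is a walk in the digraph `G`. -/
def IsWalkIn (G : SubD n) (W : List (Fin n)) : Prop :=
  W ≠ [] ∧ (∀ v ∈ W, v ∈ G.verts) ∧ W.Chain' G.edge

/-- The length of a walk: its number of edges (number of nodes minus one). -/
def elen (W : List (Fin n)) : ℕ := W.length - 1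

/-- The weight `p(W)` of a walk: sum of the weights of its edges. -/
def walkWeight (A : MPMat n) (W : List (Fin n)) : WithBot ℝ :=
  ((W.zip W.tail).map fun p => A p.1 p.2).sum

/-- `W` is a cycle in `G`: a nonempty closed walk with pairwise distinct
nodes (apart from the repeated endpoint). -/
def IsCycleIn (G : SubD n) (W : List (Fin n)) : Prop :=
  IsWalkIn G W ∧ 2 ≤ W.length ∧ W.head? = W.getLast? ∧ W.dropLast.Nodup

/-- `W` is a path in `G`: a walk with no repeated node. -/
def IsPathIn (G : SubD n) (W : List (Fin n)) : Prop :=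
  IsWalkIn G W ∧ W.Nodup

/-- `v` is reachable from `u` by a (possibly empty) walk in `G`. -/
def ReachIn (G : SubD n) (u v : Fin n) : Prop :=
  ∃ W, IsWalkIn G W ∧ W.head? = some u ∧ W.getLast? = some v

/-- `u` and `v` lie in the same strongly connected component of `G`. -/
def SccEq (G : SubD n) (u v : Fin n) : Prop := ReachIn G u v ∧ ReachIn G v u

/-- The node set of the s.c.c. of `u` in `G`. -/
def sccOf (G : SubD n) (u : Fin n) : Set (Fin n) := {v | SccEq G u v}

/-- The s.c.c. of `u` in `G`, as a digraph. -/
def sccSub (G : SubD n) (u : Fin n) : SubD n :=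
  ⟨sccOf G u, fun a b => G.edge a b ∧ a ∈ sccOf G u ∧ b ∈ sccOf G u⟩

/-- `H` is a subgraph of `G`. -/
def SubLE (H G : SubD n) : Prop := H.verts ⊆ G.verts ∧ ∀ u v, H.edge u v → G.edge u v

/-- `G` is completely reducible: there are no edges between distinct s.c.c.'s,
i.e. every edge lies inside an s.c.c. -/
def CompletelyReducible (G : SubD n) : Prop := ∀ u v, G.edge u v → ReachIn G v u

/-- `G` has no trivial s.c.c.: every node lies on a cycle of `G`. -/
def NoTrivialScc (G : SubD n) : Prop := ∀ v ∈ G.verts, ∃ W, IsCycleIn G W ∧ v ∈ W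

/-- `A` is irreducible: `𝒟(A)` is strongly connected. -/
def IrreducibleMat (A : MPMat n) : Prop := ∀ i j : Fin n, ReachIn (digr A) i j

/-- `W` is a closed walk at node `v` in `G`. -/
def IsClosedWalkAt (G : SubD n) (v : Fin n) (W : List (Fin n)) : Prop :=
  IsWalkIn G W ∧ W.head? = some v ∧ W.getLast? = some v

/-- The greatest common divisor of a set of naturals (0 for the empty set). -/
def setGcd (S : Set ℕ) : ℕ :=
  sInf {d | (∀ s ∈ S, d ∣ s) ∧ ∀ e, (∀ s ∈ S, e ∣ s) → e ∣ d}

/-- The least common multiple of a set of naturals: the least positive common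
multiple (0 if there is none). -/
def setLcm (S : Set ℕ) : ℕ := sInf {m | 0 < m ∧ ∀ s ∈ S, s ∣ m}

/-- The cyclicity of the s.c.c. of `v` in `G`: the gcd of the lengths of the
closed walks of `G` through `v` (0 if `v` lies on no nonempty closed walk). -/
def sccCyclicity (G : SubD n) (v : Fin n) : ℕ :=
  setGcd {l | 0 < l ∧ ∃ W, IsClosedWalkAt G v W ∧ elen W = l}

/-- The cyclicity of a digraph: the lcm of the cyclicities of its
(nontrivial) s.c.c.'s. -/
def graphCyclicity (G : SubD n) : ℕ :=
  setLcm {c | ∃ v ∈ G.verts, c = sccCyclicity G v ∧ 0 < c}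

/-- The walk `W` has mean weight `m`, i.e. `p(W) = l(W)·m` (finitely). -/
def meanIs (A : MPMat n) (W : List (Fin n)) (m : ℝ) : Prop :=
  walkWeight A W = (((elen W : ℝ) * m : ℝ) : WithBot ℝ)

/-- `lam` is the maximum cycle mean `λ(A)` of `A`: it is the mean of some
cycle of `𝒟(A)` and no cycle has a larger mean.  (Its existence is
equivalent to `𝒟(A)` containing a cycle, i.e. `λ(A) ≠ -∞`.) -/
def IsMaxCycleMean (A : MPMat n) (lam : ℝ) : Prop :=
  (∃ W, IsCycleIn (digr A) W ∧ meanIs A W lam) ∧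
  ∀ W m, IsCycleIn (digr A) W → meanIs A W m → m ≤ lam

/-- The set of critical nodes: nodes on some cycle of mean `λ(A)`. -/
def critNodes (A : MPMat n) (lam : ℝ) : Set (Fin n) :=
  {v | ∃ W, IsCycleIn (digr A) W ∧ meanIs A W lam ∧ v ∈ W}

/-- Critical edges: edges of some cycle of mean `λ(A)`. -/
def critEdges (A : MPMat n) (lam : ℝ) (u v : Fin n) : Prop :=
  ∃ W, IsCycleIn (digr A) W ∧ meanIs A W lam ∧ (u, v) ∈ W.zip W.tail

/-- The critical graph `𝒞(A)`. -/
def critSub (A : MPMat n) (lam : ℝ) : SubD n := ⟨critNodes A lam, critEdges A lam⟩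

/-- Add the real constant `c` to every entry. -/
def shiftMat (A : MPMat n) (c : ℝ) : MPMat n := fun i j => A i j + (c : WithBot ℝ)

/-- The max-plus Kleene star `X^* = I ⊕ X ⊕ X² ⊕ ⋯` (entrywise supremum). -/
def mpStar (X : MPMat n) : MPMat n := fun i j => ⨆ t : ℕ, mpPow X t i j

/-- The matrix `M = (((-λ)⊗A)^{γ(𝒢)})^*` used to define the CSR terms. -/
def csrM (A : MPMat n) (lam : ℝ) (G : SubD n) : MPMat n :=
  mpStar (mpPow (shiftMat A (-lam)) (graphCyclicity G))

/-- The `C` term of the CSR expansion of `A` w.r.t. the subgraph `G`. -/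
def csrC (A : MPMat n) (lam : ℝ) (G : SubD n) : MPMat n :=
  fun i j => if j ∈ G.verts then csrM A lam G i j else ⊥

/-- The `R` term of the CSR expansion of `A` w.r.t. the subgraph `G`. -/
def csrR (A : MPMat n) (lam : ℝ) (G : SubD n) : MPMat n :=
  fun i j => if i ∈ G.verts then csrM A lam G i j else ⊥

/-- The `S` term of the CSR expansion of `A` w.r.t. the subgraph `G`. -/
def csrS (A : MPMat n) (lam : ℝ) (G : SubD n) : MPMat n :=
  fun i j => if G.edge i j then A i j + ((-lam : ℝ) : WithBot ℝ) else ⊥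

/-- The matrix `C S^t R`. -/
def csr (A : MPMat n) (lam : ℝ) (G : SubD n) (t : ℕ) : MPMat n :=
  mpMul (mpMul (csrC A lam G) (mpPow (csrS A lam G) t)) (csrR A lam G)

/-- `G` is a representing subgraph of the critical graph `crit`: a completely
reducible subgraph (with no trivial s.c.c.) such that every s.c.c. of `crit`
contains exactly one s.c.c. of `G`. -/
structure IsRepresenting (crit G : SubD n) : Prop where
  le : SubLE G crit
  compRed : CompletelyReducible G
  noTriv : NoTrivialScc G
  covers : ∀ u ∈ crit.verts, ∃ v ∈ G.verts, SccEq crit u v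
  unique : ∀ v ∈ G.verts, ∀ w ∈ G.verts, SccEq crit v w → SccEq G v w

/-- `B` is subordinate to `A`: obtained from `A` by setting some entries to `-∞`. -/
def Subordinate (B A : MPMat n) : Prop := ∀ i j, B i j = A i j ∨ B i j = ⊥

/-- Set to `-∞` all entries in the rows and columns indexed by `S`. -/
def zeroRC (A : MPMat n) (S : Set (Fin n)) : MPMat n :=
  fun i j => if i ∈ S ∨ j ∈ S then ⊥ else A i j

/-- The Nachtigall scheme: zero out the rows and columns of critical nodes. -/
def bN (A : MPMat n) (lam : ℝ) : MPMat n := zeroRC A (critNodes A lam)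

/-- `V` is a max-balancing of `A`: `V = D⁻¹((-λ(A))⊗A)D` with all entries `≤ 0`,
entries `0` on critical edges, and every edge of `𝒟(V)` lies on a cycle all of
whose edges have weight at least that of the given edge (cycle cover). -/
def IsMaxBalancing (A : MPMat n) (lam : ℝ) (V : MPMat n) : Prop :=
  (∃ d : Fin n → ℝ, ∀ i j, V i j = A i j + ((d j - d i - lam : ℝ) : WithBot ℝ)) ∧
  (∀ i j, V i j ≤ (0 : WithBot ℝ)) ∧
  (∀ i j, critEdges A lam i j → V i j = (0 : WithBot ℝ)) ∧
  (∀ i j, V i j ≠ ⊥ →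
    ∃ W, IsCycleIn (digr V) W ∧ (i, j) ∈ W.zip W.tail ∧ ∀ p ∈ W.zip W.tail, V i j ≤ V p.1 p.2)

/-- The Hartmann-Arguelles threshold graph `Θ^{ha}(μ)`: induced by the edges
with `v_{ij} ≥ μ`; by convention `Θ^{ha}(-∞) = 𝒟(A)`. -/
def thrHA (A V : MPMat n) (μ : WithBot ℝ) : SubD n :=
  if μ = ⊥ then digr A
  else ⟨{u | ∃ w, μ ≤ V u w ∨ μ ≤ V w u}, fun u v => μ ≤ V u v⟩

/-- The cycle threshold graph `Θ^{ct}(μ)`: induced by all nodes and edges of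
cycles of mean weight `≥ μ`; by convention `Θ^{ct}(-∞) = 𝒟(A)`. -/
def thrCT (A : MPMat n) (μ : WithBot ℝ) : SubD n :=
  if μ = ⊥ then digr A
  else ⟨{v | ∃ W m, IsCycleIn (digr A) W ∧ meanIs A W m ∧ μ ≤ (m : WithBot ℝ) ∧ v ∈ W},
        fun u v => ∃ W m, IsCycleIn (digr A) W ∧ meanIs A W m ∧ μ ≤ (m : WithBot ℝ) ∧
          (u, v) ∈ W.zip W.tail⟩

/-- `Θ` has an s.c.c. containing no s.c.c. of `crit`. -/
def HasFreeScc (Θ crit : SubD n) : Prop :=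
  ∃ u ∈ Θ.verts, ¬ ∃ w ∈ crit.verts, sccOf crit w ⊆ sccOf Θ u

/-- `μ` is the greatest value `≤ λ(A)` satisfying `P` (or `-∞` if there is
no such value). -/
def IsThrMax (P : WithBot ℝ → Prop) (lam : ℝ) (μ : WithBot ℝ) : Prop :=
  (μ ≤ (lam : WithBot ℝ) ∧ P μ ∧ ∀ μ', μ' ≤ (lam : WithBot ℝ) → P μ' → μ' ≤ μ) ∨
  (μ = ⊥ ∧ ∀ μ', μ' ≤ (lam : WithBot ℝ) → ¬ P μ')

/-- `μ = μ^{ha}` for the max-balancing `V` of `A`. -/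
def IsMuHA (A : MPMat n) (lam : ℝ) (V : MPMat n) (μ : WithBot ℝ) : Prop :=
  IsThrMax (fun m => HasFreeScc (thrHA A V m) (critSub A lam)) lam μ

/-- `μ = μ^{ct}` for `A`. -/
def IsMuCT (A : MPMat n) (lam : ℝ) (μ : WithBot ℝ) : Prop :=
  IsThrMax (fun m => HasFreeScc (thrCT A m) (critSub A lam)) lam μ

/-- The union of the s.c.c.'s of `Θ` intersecting the node set `crit`. -/
def unionSccMeeting (Θ : SubD n) (crit : Set (Fin n)) : Set (Fin n) :=
  {v | v ∈ Θ.verts ∧ ∃ w ∈ crit, SccEq Θ v w}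

/-- The node set `𝒢^{ha}` of the Hartmann-Arguelles scheme. -/
def haNodes (A V : MPMat n) (lam : ℝ) (μ : WithBot ℝ) : Set (Fin n) :=
  unionSccMeeting (thrHA A V μ) (critNodes A lam)

/-- The matrix `B^{HA}` of the Hartmann-Arguelles scheme. -/
def bHA (A V : MPMat n) (lam : ℝ) (μ : WithBot ℝ) : MPMat n :=
  zeroRC A (haNodes A V lam μ)

/-- The node set `𝒢^{ct}` of the cycle threshold scheme. -/
def ctNodes (A : MPMat n) (lam : ℝ) (μ : WithBot ℝ) : Set (Fin n) :=
  unionSccMeeting (thrCT A μ) (critNodes A lam)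

/-- The matrix `B^{ct}` of the cycle threshold scheme. -/
def bCT (A : MPMat n) (lam : ℝ) (μ : WithBot ℝ) : MPMat n :=
  zeroRC A (ctNodes A lam μ)

/-- The graph `𝒢^{ct}`: the union of the s.c.c.'s of `Θ^{ct}(μ^{ct})`
intersecting `𝒞(A)`, as a digraph. -/
def ctSub (A : MPMat n) (lam : ℝ) (μ : WithBot ℝ) : SubD n :=
  ⟨ctNodes A lam μ,
   fun u v => (thrCT A μ).edge u v ∧ u ∈ ctNodes A lam μ ∧ v ∈ ctNodes A lam μ⟩

/-- The circumference of `G`: the greatest length of a cycle of `G`. -/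
def circumf (G : SubD n) : ℕ := sSup {l | ∃ W, IsCycleIn G W ∧ W.length = l + 1}

/-- The cab driver's diameter of `G`: the greatest length of a path of `G`. -/
def cabDiam (G : SubD n) : ℕ := sSup {l | ∃ W, IsPathIn G W ∧ W.length = l + 1}

/-- The girth of the s.c.c. of `v` in `G`: the least length of a cycle lying
in the s.c.c. of `v`. -/
def sccGirth (G : SubD n) (v : Fin n) : ℕ :=
  sInf {l | 0 < l ∧ ∃ W, IsCycleIn G W ∧ W.length = l + 1 ∧ ∀ u ∈ W, SccEq G v u}

/-- The max-girth of `G`: the greatest girth of an s.c.c. of `G`. -/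
def maxGirth (G : SubD n) : ℕ := sSup {g | ∃ v ∈ G.verts, 0 < g ∧ g = sccGirth G v}

/-- The max-cyclicity of `G`: the greatest cyclicity of an s.c.c. of `G`. -/
def maxCyclicity (G : SubD n) : ℕ := sSup {c | ∃ v ∈ G.verts, 0 < c ∧ c = sccCyclicity G v}

/-- The Wielandt number: `Wi(n) = (n-1)² + 1` for `n > 1`, `Wi(1) = 0`. -/
def wielandt (k : ℕ) : ℕ := if k ≤ 1 then 0 else (k - 1) ^ 2 + 1

/-- The set of finite entries of `A`. -/
def finEntries (A : MPMat n) : Set ℝ := {x | ∃ i j, A i j = (x : WithBot ℝ)}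

/-- The least finite entry of `A`. -/
def minEnt (A : MPMat n) : ℝ := sInf (finEntries A)

/-- The greatest finite entry of `A`. -/
def maxEnt (A : MPMat n) : ℝ := sSup (finEntries A)

/-- `‖A‖`: the difference between the greatest and least finite entries. -/
def matNorm (A : MPMat n) : ℝ := maxEnt A - minEnt A

/-- `n_B`: the size of the smallest square submatrix of `B` containing all
finite entries of `B`. -/
def nB (B : MPMat n) : ℕ := Set.ncard {i | ∃ j, B i j ≠ ⊥ ∨ B j i ≠ ⊥}

/-- `‖v‖`: the difference between the greatest and least entries of `v`. -/
def vecNorm (v : Fin n → ℝ) : ℝ := sSup (Set.range v) - sInf (Set.range v)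

/-- The exploration penalty `ep^γ(i)` (w.r.t. the graph `crit`): the least `T`
such that for every multiple `t` of `γ` with `t ≥ T` there is a closed walk of
length `t` at `i` in `crit`. -/
def epAt (crit : SubD n) (γ : ℕ) (i : Fin n) : ℕ :=
  sInf {T | ∀ t, γ ∣ t → T ≤ t → ∃ W, IsClosedWalkAt crit i W ∧ elen W = t}

/-- The exploration penalty `ep^γ(S)`: the maximum of `ep^γ(i)` over `i ∈ S`. -/
def epOn (crit : SubD n) (γ : ℕ) (S : Set (Fin n)) : ℕ := sSup {e | ∃ i ∈ S, e = epAt crit γ i}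

/-- `ep(𝒞(A))`: the maximum over the s.c.c.'s `𝒞_l` of `crit` of
`ep^{γ(𝒞_l)}(𝒞_l)`. -/
def epCrit (crit : SubD n) : ℕ :=
  sSup {e | ∃ i ∈ crit.verts, e = epAt crit (sccCyclicity crit i) i}

/-- The weak CSR expansion `A^t = λ^{⊗t}⊗(CS^tR) ⊕ B^t` holds at time `t`
(with CSR terms taken w.r.t. the subgraph `G`). -/
def weakCSReq (A B : MPMat n) (lam : ℝ) (G : SubD n) (t : ℕ) : Prop :=
  ∀ i j, mpPow A t i j = max (csr A lam G t i j + (((t : ℝ) * lam : ℝ) : WithBot ℝ)) (mpPow B t i j)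

/-- The domination `λ^{⊗t}⊗(CS^tR) ≥ B^t` holds at time `t`. -/
def T2eq (A B : MPMat n) (lam : ℝ) (G : SubD n) (t : ℕ) : Prop :=
  ∀ i j, mpPow B t i j ≤ csr A lam G t i j + (((t : ℝ) * lam : ℝ) : WithBot ℝ)

/-- The domination `λ^{⊗t}⊗(CS^tRv) ≥ B^t v` holds at time `t`. -/
def T2veq (A B : MPMat n) (lam : ℝ) (G : SubD n) (v : Fin n → ℝ) (t : ℕ) : Prop :=
  ∀ i, mpMulVec (mpPow B t) (fun j => (v j : WithBot ℝ)) i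
      ≤ mpMulVec (csr A lam G t) (fun j => (v j : WithBot ℝ)) i + (((t : ℝ) * lam : ℝ) : WithBot ℝ)

/-- One step of removing a (nonempty) closed subwalk from a walk. -/
def RemoveStep (W V : List (Fin n)) : Prop :=
  ∃ (pre mid post : List (Fin n)) (x : Fin n),
    W = pre ++ x :: mid ++ x :: post ∧ V = pre ++ x :: post

/-- One step of inserting a cycle of `C` into a walk (at an occurrence of a
node of that cycle). -/
def InsertStep (C : SubD n) (W V : List (Fin n)) : Prop :=
  ∃ (pre post mid : List (Fin n)) (x : Fin n),
    W = pre ++ x :: post ∧ V = pre ++ x :: mid ++ x :: post ∧ IsCycleIn C (x :: mid ++ [x])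

/-- `V` is obtained from `W` by removing cycles. -/
def RemOnly : List (Fin n) → List (Fin n) → Prop := Relation.ReflTransGen RemoveStep

/-- `V` is obtained from `W` by removing cycles and possibly inserting cycles
of `C`. -/
def RemIns (C : SubD n) : List (Fin n) → List (Fin n) → Prop :=
  Relation.ReflTransGen fun W V => RemoveStep W V ∨ InsertStep C W V

/-- `V` is obtained from `W` by removing at least one cycle and possibly
inserting cycles of `C`. -/
def RemInsStrict (C : SubD n) (W V : List (Fin n)) : Prop :=
  ∃ W₁ W₂, RemIns C W W₁ ∧ RemoveStep W₁ W₂ ∧ RemIns C W₂ V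

/-- `T` witnesses the cycle removal threshold `T_cr^γ(C) ≤ T` in the digraph
`G`: every walk of `G` through `C` of length `≥ T` can be reduced (removing
cycles, possibly inserting cycles of `C`) to a walk through `C` with the same
endpoints, the same length mod `γ`, and length `≤ T`. -/
def TcrProp (G C : SubD n) (γ T : ℕ) : Prop :=
  ∀ W, IsWalkIn G W → (∃ v ∈ C.verts, v ∈ W) → T ≤ elen W →
    ∃ V, RemIns C W V ∧ IsWalkIn G V ∧ (∃ v ∈ C.verts, v ∈ V) ∧
      V.head? = W.head? ∧ V.getLast? = W.getLast? ∧ elen V ≡ elen W [MOD γ] ∧ elen V ≤ T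

/-- `T` witnesses the strict cycle removal threshold `T̃_cr^γ(C) ≤ T`. -/
def TcrStrictProp (G C : SubD n) (γ T : ℕ) : Prop :=
  ∀ W, IsWalkIn G W → (∃ v ∈ C.verts, v ∈ W) → T ≤ elen W →
    ∃ V, RemInsStrict C W V ∧ IsWalkIn G V ∧ (∃ v ∈ C.verts, v ∈ V) ∧
      V.head? = W.head? ∧ V.getLast? = W.getLast? ∧ elen V ≡ elen W [MOD γ] ∧ elen V ≤ T

/-- The cycle removal threshold `T_cr^γ(C)` of the subgraph `C` in `G`. -/
def Tcr (G C : SubD n) (γ : ℕ) : ℕ := sInf {T | TcrProp G C γ T}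

/-- The strict cycle removal threshold `T̃_cr^γ(C)` of the subgraph `C` in `G`. -/
def TcrStrict (G C : SubD n) (γ : ℕ) : ℕ := sInf {T | TcrStrictProp G C γ T}

/-- The subgraph formed by the nodes and edges of the walk `W`. -/
def cycleSub (W : List (Fin n)) : SubD n :=
  ⟨{v | v ∈ W}, fun a b => (a, b) ∈ W.zip W.tail⟩

/-- The single-node subgraph `{i}` (with no edges). -/
def singleSub (i : Fin n) : SubD n := ⟨{i}, fun _ _ => False⟩

/-- `λ(M)` as an element of `ℝmax` (`-∞` if `𝒟(M)` has no cycle). -/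
def lamW (M : MPMat n) : WithBot ℝ :=
  sSup {x : WithBot ℝ | ∃ W m, IsCycleIn (digr M) W ∧ meanIs M W m ∧ x = (m : WithBot ℝ)}

end MaxPlus

/-!
If a node occurs more than `γ` times in a walk, two of its occurrences sit at positions
congruent mod `γ` (pigeonhole), so the closed subwalk between them has length divisible by `γ`.
Deleting it keeps the endpoints and the length mod `γ` and shortens the walk; iterate.
-/

lemma List.exists_lt_getElem_eq_modEq_of_lt_count {α : Type*} [DecidableEq α] {l : List α}
    {v : α} {γ : ℕ} (hγ : 0 < γ) (hv : γ < l.count v) :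
    ∃ a b, ∃ (hab : a < b) (hb : b < l.length),
      l[a] = v ∧ l[b] = v ∧ a ≡ b [MOD γ] := by
  have hcount : (Finset.univ.filter fun i : Fin l.length => l[i] = v).card = l.count v :=
    Fin.card_filter_univ_eq_vector_get_eq_count v ⟨l, rfl⟩
  have hcard : (Finset.range γ).card <
      (Finset.univ.filter fun i : Fin l.length => l[i] = v).card := by
    rwa [Finset.card_range, hcount]
  obtain ⟨p, hp, q, hq, hpq, hmod⟩ := Finset.exists_ne_map_eq_of_card_lt_of_maps_to hcard
    (f := fun i : Fin l.length => (i : ℕ) % γ) fun i _ => Finset.mem_range.mpr (Nat.mod_lt _ hγ)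
  simp only [Finset.mem_filter, Finset.mem_univ, true_and] at hp hq
  rcases Fin.lt_or_lt_of_ne hpq with h | h
  · exact ⟨p, q, h, q.isLt, hp, hq, hmod⟩
  · exact ⟨q, p, h, p.isLt, hq, hp, hmod.symm⟩

lemma List.eq_take_append_cons_append_cons_drop {α : Type*} (l : List α) {a b : ℕ}
    (hab : a < b) (hb : b < l.length) :
    l = l.take a ++ l[a] :: (l.drop (a + 1)).take (b - (a + 1)) ++ l[b] :: l.drop (b + 1) := by
  have hdrop : l.drop (a + 1) = (l.drop (a + 1)).take (b - (a + 1)) ++ l[b] :: l.drop (b + 1) := by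
    rw [← List.drop_eq_getElem_cons hb]
    conv_lhs => rw [← List.take_append_drop (b - (a + 1)) (l.drop (a + 1)), List.drop_drop]
    congr 2
    omega
  conv_lhs => rw [← List.take_append_drop a l, List.drop_eq_getElem_cons (by omega), hdrop]
  simp

namespace MaxPlus

variable {n : ℕ} {W V : List (Fin n)}

lemma RemoveStep.isWalkIn {G : SubD n} (h : RemoveStep W V) (hW : IsWalkIn G W) :
    IsWalkIn G V := by
  obtain ⟨pre, mid, post, x, rfl, rfl⟩ := h
  obtain ⟨-, hverts, hchain⟩ := hW
  refine ⟨by simp, fun u hu => hverts u ?_, ?_⟩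
  · simp only [List.mem_append, List.mem_cons] at hu ⊢
    tauto
  change List.IsChain G.edge _ at hchain ⊢
  rw [List.append_assoc, List.cons_append, List.isChain_split] at hchain
  have hpost := (List.isChain_split (l₁ := x :: mid)).mp hchain.2
  exact List.isChain_split.mpr ⟨hchain.1, hpost.2⟩

lemma RemoveStep.head?_eq (h : RemoveStep W V) : V.head? = W.head? := by
  obtain ⟨pre, mid, post, x, rfl, rfl⟩ := h
  cases pre <;> simp

lemma RemoveStep.getLast?_eq (h : RemoveStep W V) : V.getLast? = W.getLast? := by
  obtain ⟨pre, mid, post, x, rfl, rfl⟩ := h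
  simp only [List.getLast?_append_cons]

lemma IsWalkIn.length_pos {G : SubD n} (h : IsWalkIn G W) : 0 < W.length :=
  List.length_pos_iff.mpr h.1

lemma RemOnly.isWalkIn {G : SubD n} (h : RemOnly W V) (hW : IsWalkIn G W) : IsWalkIn G V :=
  Relation.ReflTransGen.rec hW (fun _ hstep hU => hstep.isWalkIn hU) h

lemma RemOnly.head?_eq (h : RemOnly W V) : V.head? = W.head? :=
  Relation.ReflTransGen.rec rfl (fun _ hstep hU => hstep.head?_eq.trans hU) h

lemma RemOnly.getLast?_eq (h : RemOnly W V) : V.getLast? = W.getLast? :=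
  Relation.ReflTransGen.rec rfl (fun _ hstep hU => hstep.getLast?_eq.trans hU) h

lemma exists_removeStep_length_modEq {γ : ℕ} (hγ : 0 < γ) {v : Fin n} (hv : γ < W.count v) :
    ∃ V, RemoveStep W V ∧ V.length < W.length ∧ V.length ≡ W.length [MOD γ] := by
  obtain ⟨a, b, hab, hb, ha, hbv, hmod⟩ := W.exists_lt_getElem_eq_modEq_of_lt_count hγ hv
  have hdecomp := W.eq_take_append_cons_append_cons_drop hab hb
  rw [hbv, ha] at hdecomp
  refine ⟨W.take a ++ v :: W.drop (b + 1), ⟨_, _, _, v, hdecomp, rfl⟩, ?_⟩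
  have hlen : (W.take a ++ v :: W.drop (b + 1)).length + (b - a) = W.length := by
    simp only [List.length_append, List.length_take, List.length_cons, List.length_drop]
    omega
  have hdvd : γ ∣ b - a := (Nat.modEq_iff_dvd' hab.le).mp hmod
  refine ⟨by omega, ?_⟩
  rw [← hlen]
  simpa using ((Nat.modEq_zero_iff_dvd.mpr hdvd).add_left
    (W.take a ++ v :: W.drop (b + 1)).length).symm

lemma exists_remOnly_length_modEq_count_le {γ : ℕ} (hγ : 0 < γ) (W : List (Fin n)) :
    ∃ W', RemOnly W W' ∧ W'.length ≡ W.length [MOD γ] ∧ ∀ v, W'.count v ≤ γ := by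
  by_cases hcount : ∀ v, W.count v ≤ γ
  · exact ⟨W, .refl, .refl _, hcount⟩
  push Not at hcount
  obtain ⟨v, hv⟩ := hcount
  obtain ⟨V, hstep, hshorter, hmod⟩ := exists_removeStep_length_modEq hγ hv
  obtain ⟨W', hrem, hmod', hcount'⟩ := exists_remOnly_length_modEq_count_le hγ V
  exact ⟨W', .head hstep hrem, hmod'.trans hmod, hcount'⟩
termination_by W.length
decreasing_by exact hshorter

/-- Every walk `W` from `i` to `j` can be reduced, by
removing cycles, to a walk `W'` from `i` to `j` with `l(W') ≡ l(W) (mod γ)` in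
which every node appears at most `γ` times. -/
theorem remove_cycles_count_le {n : ℕ} (G : SubD n) (γ : ℕ) (hγ : 1 ≤ γ)
    (i j : Fin n) (W : List (Fin n)) (hW : IsWalkIn G W)
    (hi : W.head? = some i) (hj : W.getLast? = some j) :
    ∃ W', RemOnly W W' ∧ IsWalkIn G W' ∧
      W'.head? = some i ∧ W'.getLast? = some j ∧
      elen W' ≡ elen W [MOD γ] ∧ ∀ v : Fin n, W'.count v ≤ γ := by
  obtain ⟨W', hrem, hmod, hcount⟩ := exists_remOnly_length_modEq_count_le hγ W
  have hW' := hrem.isWalkIn hW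
  refine ⟨W', hrem, hW', hrem.head?_eq.trans hi, hrem.getLast?_eq.trans hj, ?_, hcount⟩
  refine Nat.ModEq.add_right_cancel' 1 ?_
  rwa [elen, elen, Nat.sub_add_cancel hW'.length_pos, Nat.sub_add_cancel hW.length_pos]

end MaxPlus
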